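/- arXiv:1110.4996 — 3 statements merged into one kernel-verified Lean document; each statement's English description precedes it below -/
import Mathlib

section
/- Let G be a topological group, X a G-space admitting local cross-sections (i.e., for every point x0 of X there is a continuous map χ from a neighborhood U of x0 to G with χ(u)·x0 = u for all u in U). Then every G-equivariant continuous map π : Y → X from a G-space Y to X is locally trivial: every point of X has a neighborhood U such that π restricted to π⁻¹(U) is homeomorphic over U to the projection U × π⁻¹(x0) → U. -/
/-!
Over the domain `U` of a local cross-section `χ` at `x0`, the group element `χ (π y)` carries the
fibre over `x0` onto the fibre over `π y`, by equivariance. Hence `y ↦ (π y, (χ (π y))⁻¹ • y)`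
and `(u, z) ↦ χ u • z` are mutually inverse, and both are continuous because `χ` is continuous
on `U` and inversion and the action are continuous.
-/

open Set

section LocalTrivialization

variable {G X Y : Type*} [Group G] [MulAction G X] [MulAction G Y]
  {π : Y → X} {U : Set X} {x0 : X} {χ : X → G}

theorem apply_inv_section_smul (hequiv : ∀ (g : G) (y : Y), π (g • y) = g • π y)
    (hχx0 : ∀ u ∈ U, χ u • x0 = u) {y : Y} (hy : π y ∈ U) :
    π ((χ (π y))⁻¹ • y) = x0 := by
  rw [hequiv, inv_smul_eq_iff, hχx0 _ hy]

theorem apply_section_smul (hequiv : ∀ (g : G) (y : Y), π (g • y) = g • π y)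
    (hχx0 : ∀ u ∈ U, χ u • x0 = u) {u : X} (hu : u ∈ U) {z : Y} (hz : π z = x0) :
    π (χ u • z) = u := by
  rw [hequiv, hz, hχx0 u hu]

variable [TopologicalSpace G] [ContinuousInv G] [TopologicalSpace X]
  [TopologicalSpace Y] [ContinuousSMul G Y]

def localTrivializationOfSection (hπ : Continuous π)
    (hequiv : ∀ (g : G) (y : Y), π (g • y) = g • π y)
    (hχ : ContinuousOn χ U) (hχx0 : ∀ u ∈ U, χ u • x0 = u) :
    π ⁻¹' U ≃ₜ U × π ⁻¹' {x0} where
  toFun y := (⟨π y, y.2⟩, ⟨(χ (π y))⁻¹ • (y : Y), apply_inv_section_smul hequiv hχx0 y.2⟩)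
  invFun p := ⟨χ p.1 • (p.2 : Y), by
    rw [mem_preimage, apply_section_smul hequiv hχx0 p.1.2 p.2.2]
    exact p.1.2⟩
  left_inv y := Subtype.ext (smul_inv_smul _ _)
  right_inv := by
    rintro ⟨u, z⟩
    have hu : π (χ u • (z : Y)) = u := apply_section_smul hequiv hχx0 u.2 z.2
    refine Prod.ext (Subtype.ext hu) (Subtype.ext ?_)
    simp only [hu, inv_smul_smul]
  continuous_toFun := by
    have hπU : Continuous fun y : π ⁻¹' U => π y := hπ.comp continuous_subtype_val
    have hχπ : Continuous fun y : π ⁻¹' U => χ (π y) := hχ.comp_continuous hπU fun y => y.2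
    exact (hπU.subtype_mk _).prodMk ((hχπ.inv.smul continuous_subtype_val).subtype_mk _)
  continuous_invFun := by
    have hχ₁ : Continuous fun p : U × π ⁻¹' {x0} => χ p.1 :=
      hχ.comp_continuous (continuous_subtype_val.comp continuous_fst) fun p => p.1.2
    exact (hχ₁.smul (continuous_subtype_val.comp continuous_snd)).subtype_mk _

theorem localTrivializationOfSection_apply_fst (hπ : Continuous π)
    (hequiv : ∀ (g : G) (y : Y), π (g • y) = g • π y)
    (hχ : ContinuousOn χ U) (hχx0 : ∀ u ∈ U, χ u • x0 = u) (y : π ⁻¹' U) :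
    ((localTrivializationOfSection hπ hequiv hχ hχx0 y).1 : X) = π y :=
  rfl

end LocalTrivialization

theorem stmt_0_general {G X Y : Type*} [Group G] [TopologicalSpace G] [IsTopologicalGroup G]
    [TopologicalSpace X] [MulAction G X]
    [TopologicalSpace Y] [MulAction G Y] [ContinuousSMul G Y]
    (π : Y → X) (hπcont : Continuous π)
    (hequiv : ∀ (g : G) (y : Y), π (g • y) = g • π y)
    (hsec : ∀ x0 : X, ∃ U ∈ nhds x0, ∃ χ : X → G,
      ContinuousOn χ U ∧ ∀ u ∈ U, χ u • x0 = u) :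
    ∀ x0 : X, ∃ U ∈ nhds x0,
      ∃ e : ↥(π ⁻¹' U) ≃ₜ ↥U × ↥(π ⁻¹' {x0}),
        ∀ y : ↥(π ⁻¹' U), ((e y).1 : X) = π (y : Y) := by
  intro x0
  obtain ⟨U, hU, χ, hχ, hχx0⟩ := hsec x0
  exact ⟨U, hU, localTrivializationOfSection hπcont hequiv hχ hχx0,
    localTrivializationOfSection_apply_fst hπcont hequiv hχ hχx0⟩

/-- Palais: if a `G`-space `X` admits local cross-sections, then every
`G`-equivariant continuous map `π : Y → X` is locally trivial. -/
theorem stmt_0 {G X Y : Type*} [Group G] [TopologicalSpace G] [IsTopologicalGroup G]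
    [TopologicalSpace X] [MulAction G X] [ContinuousSMul G X]
    [TopologicalSpace Y] [MulAction G Y] [ContinuousSMul G Y]
    (π : Y → X) (hπcont : Continuous π)
    (hequiv : ∀ (g : G) (y : Y), π (g • y) = g • π y)
    (hsec : ∀ x0 : X, ∃ U ∈ nhds x0, ∃ χ : X → G,
      ContinuousOn χ U ∧ ∀ u ∈ U, χ u • x0 = u) :
    ∀ x0 : X, ∃ U ∈ nhds x0,
      ∃ e : ↥(π ⁻¹' U) ≃ₜ ↥U × ↥(π ⁻¹' {x0}),
        ∀ y : ↥(π ⁻¹' U), ((e y).1 : X) = π (y : Y) :=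
  stmt_0_general π hπcont hequiv hsec
end

section
/- Every semialgebraic subset S of ℝⁿ with empty interior is contained in the zero set of a nontrivial polynomial: there exists a polynomial p on ℝⁿ, not identically zero, with p(x) = 0 for all x ∈ S. -/
/-!
The frontier of `{p > 0}` lies in the zero set of `p`, frontiers are invariant under
complement, and the frontier of a union lies in the union of the frontiers, which is
contained in the zero set of the product. So by induction the frontier of every
semialgebraic set lies in the zero set of a nonzero polynomial. A set with empty interior
is contained in its frontier.
-/

/-- The semialgebraic subsets of `ℝⁿ`: the smallest Boolean algebra of subsets
containing all sets of the form `{x | p x > 0}` for polynomials `p`. -/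
inductive IsSemialgebraic (n : ℕ) : Set (Fin n → ℝ) → Prop where
  | basic (p : MvPolynomial (Fin n) ℝ) :
      IsSemialgebraic n {x | 0 < MvPolynomial.eval x p}
  | compl {s : Set (Fin n → ℝ)} : IsSemialgebraic n s → IsSemialgebraic n sᶜ
  | union {s t : Set (Fin n → ℝ)} :
      IsSemialgebraic n s → IsSemialgebraic n t → IsSemialgebraic n (s ∪ t)

open MvPolynomial

theorem MvPolynomial.frontier_setOf_pos_subset {σ : Type*} (p : MvPolynomial σ ℝ) :
    frontier {x : σ → ℝ | 0 < eval x p} ⊆ {x | eval x p = 0} := fun _ hx =>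
  (frontier_lt_subset_eq continuous_const (continuous_eval p) hx).symm

theorem IsSemialgebraic.exists_ne_zero_frontier_subset {n : ℕ} {S : Set (Fin n → ℝ)}
    (hS : IsSemialgebraic n S) :
    ∃ p : MvPolynomial (Fin n) ℝ, p ≠ 0 ∧ frontier S ⊆ {x | eval x p = 0} := by
  induction hS with
  | basic p =>
    by_cases hp : p = 0
    · subst hp
      exact ⟨1, one_ne_zero, by simp⟩
    · exact ⟨p, hp, p.frontier_setOf_pos_subset⟩
  | compl _ ih =>
    rwa [frontier_compl]
  | union _ _ ihs iht =>
    obtain ⟨p, hp, hps⟩ := ihs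
    obtain ⟨q, hq, hqt⟩ := iht
    refine ⟨p * q, mul_ne_zero hp hq, fun x hx => ?_⟩
    change eval x (p * q) = 0
    rw [map_mul, mul_eq_zero]
    exact (frontier_union_subset _ _ hx).imp (fun h => hps h.1) (fun h => hqt h.2)

/-- A semialgebraic subset of `ℝⁿ` with empty interior is contained in the zero
set of a nontrivial polynomial. -/
theorem stmt_2 {n : ℕ} {S : Set (Fin n → ℝ)} (hS : IsSemialgebraic n S)
    (hint : interior S = ∅) :
    ∃ p : MvPolynomial (Fin n) ℝ, p ≠ 0 ∧ ∀ x ∈ S, MvPolynomial.eval x p = 0 := by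
  obtain ⟨p, hp, hpS⟩ := hS.exists_ne_zero_frontier_subset
  have hS_frontier : S ⊆ frontier S := by
    rw [frontier, hint, Set.sdiff_empty]
    exact subset_closure
  exact ⟨p, hp, fun x hx => hpS (hS_frontier hx)⟩
end

section
/- Suppose a group H acts properly discontinuously on a locally compact, connected Hausdorff space X with compact quotient X/H. Then H is finitely generated. In particular, if C is a compact subset of X whose interior maps onto X/H, then H is generated by the finitely many elements h ∈ H with h(C) ∩ C ≠ ∅. -/
/-!
The translates of the interior `U` of `C` cover `X`. If `G` is the subgroup generated by the
elements `h` with `h • C ∩ C ≠ ∅`, then two translates `g₁ • U` and `g₂ • U` can only meet when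
`g₁` and `g₂` lie in the same left coset of `G`. Hence the union of the translates by `G` and the
union of the translates by `H \ G` are disjoint open sets covering `X`; by connectedness the
second is empty, so `G = H`. Finiteness of the generating set is proper discontinuity.
-/

open Pointwise

namespace MulAction

variable {H X : Type*} [Group H] [MulAction H X]

def meetingTranslates (U : Set X) : Set H := {h : H | (h • U ∩ U).Nonempty}

theorem meetingTranslates_mono {U V : Set X} (hUV : U ⊆ V) :
    meetingTranslates (H := H) U ⊆ meetingTranslates V :=
  fun _ hh => hh.mono (Set.inter_subset_inter (Set.smul_set_mono hUV) hUV)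

theorem inv_mul_mem_meetingTranslates {U : Set X} {g₁ g₂ : H} {x : X}
    (h₁ : x ∈ g₁ • U) (h₂ : x ∈ g₂ • U) : g₂⁻¹ * g₁ ∈ meetingTranslates U := by
  rw [Set.mem_smul_set_iff_inv_smul_mem] at h₁ h₂
  refine ⟨g₂⁻¹ • x, ⟨g₁⁻¹ • x, h₁, ?_⟩, h₂⟩
  show (g₂⁻¹ * g₁) • g₁⁻¹ • x = g₂⁻¹ • x
  rw [smul_smul, mul_inv_cancel_right]

theorem closure_meetingTranslates_eq_top [TopologicalSpace X] [ConnectedSpace X]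
    [ContinuousConstSMul H X] {U : Set X} (hU : IsOpen U) (hcover : ∀ x : X, ∃ h : H, h • x ∈ U) :
    Subgroup.closure (meetingTranslates (H := H) U) = ⊤ := by
  set G := Subgroup.closure (meetingTranslates (H := H) U)
  have mem_of_meet {g₁ g₂ : H} {x : X} (h₁ : x ∈ g₁ • U) (h₂ : x ∈ g₂ • U) (hg₂ : g₂ ∈ G) :
      g₁ ∈ G := by
    simpa using G.mul_mem hg₂ (Subgroup.subset_closure (inv_mul_mem_meetingTranslates h₁ h₂))
  set A := ⋃ g ∈ G, g • U
  set B := ⋃ g ∈ (G : Set H)ᶜ, g • U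
  have hA : IsOpen A := isOpen_biUnion fun g _ => hU.smul g
  have hB : IsOpen B := isOpen_biUnion fun g _ => hU.smul g
  have hAB : Disjoint A B := by
    refine Set.disjoint_left.2 fun x hxA hxB => ?_
    obtain ⟨g₁, hg₁, hx₁⟩ := Set.mem_iUnion₂.1 hxA
    obtain ⟨g₂, hg₂, hx₂⟩ := Set.mem_iUnion₂.1 hxB
    exact hg₂ (mem_of_meet hx₂ hx₁ hg₁)
  have hcoverAB : Set.univ ⊆ A ∪ B := by
    intro x _
    obtain ⟨h, hh⟩ := hcover x
    have hx : x ∈ h⁻¹ • U := Set.mem_smul_set_iff_inv_smul_mem.2 (by rwa [inv_inv])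
    by_cases hG : h⁻¹ ∈ G
    · exact Or.inl (Set.mem_biUnion hG hx)
    · exact Or.inr (Set.mem_biUnion hG hx)
  obtain ⟨u, hu⟩ : U.Nonempty := by
    obtain ⟨x₀⟩ := ‹ConnectedSpace X›.toNonempty
    exact ⟨_, (hcover x₀).choose_spec⟩
  have huA : u ∈ A := Set.mem_biUnion G.one_mem (by rwa [one_smul])
  have hA_univ : Set.univ ⊆ A :=
    (isPreconnected_univ.subset_or_subset hA hB hAB hcoverAB).resolve_right
      fun hB_univ => Set.disjoint_left.1 hAB huA (hB_univ trivial)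
  refine eq_top_iff.2 fun h _ => ?_
  obtain ⟨g, hg, hhu⟩ := Set.mem_iUnion₂.1 (hA_univ (Set.mem_univ (h • u)))
  exact mem_of_meet (Set.smul_mem_smul_set hu) hhu hg

end MulAction

open MulAction in
theorem stmt_3_general {H X : Type*} [Group H] [TopologicalSpace X]
    [ConnectedSpace X]
    [MulAction H X] (hhomeo : ∀ h : H, Continuous (fun x : X => h • x))
    (hpd : ∀ K : Set X, IsCompact K → {h : H | ((h • K) ∩ K).Nonempty}.Finite)
    (C : Set X) (hC : IsCompact C)
    (hcover : ∀ x : X, ∃ h : H, h • x ∈ interior C) :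
    Group.FG H ∧ {h : H | ((h • C) ∩ C).Nonempty}.Finite ∧
      Subgroup.closure {h : H | ((h • C) ∩ C).Nonempty} = ⊤ := by
  have : ContinuousConstSMul H X := ⟨hhomeo⟩
  have hfinite : (meetingTranslates (H := H) C).Finite := hpd C hC
  have hgen : Subgroup.closure (meetingTranslates (H := H) C) = ⊤ :=
    eq_top_mono (Subgroup.closure_mono (meetingTranslates_mono interior_subset))
      (closure_meetingTranslates_eq_top isOpen_interior hcover)
  exact ⟨Group.fg_iff.2 ⟨_, hgen, hfinite⟩, hfinite, hgen⟩

/-- If `H` acts properly discontinuously (by homeomorphisms) on a locally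
compact connected Hausdorff space `X` with compact quotient, then `H` is
finitely generated; in particular, if `C` is compact and its interior maps
onto `X/H`, then `H` is generated by the finitely many `h` with
`h • C ∩ C ≠ ∅`. -/
theorem stmt_3 {H X : Type*} [Group H] [TopologicalSpace X]
    [LocallyCompactSpace X] [ConnectedSpace X] [T2Space X]
    [MulAction H X] (hhomeo : ∀ h : H, Continuous (fun x : X => h • x))
    (hpd : ∀ K : Set X, IsCompact K → {h : H | ((h • K) ∩ K).Nonempty}.Finite)
    [CompactSpace (Quotient (MulAction.orbitRel H X))]
    (C : Set X) (hC : IsCompact C)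
    (hcover : ∀ x : X, ∃ h : H, h • x ∈ interior C) :
    Group.FG H ∧ {h : H | ((h • C) ∩ C).Nonempty}.Finite ∧
      Subgroup.closure {h : H | ((h • C) ∩ C).Nonempty} = ⊤ :=
  stmt_3_general hhomeo hpd C hC hcover
end
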